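/- Let H be an n×n complex Hermitian matrix with simple spectrum λ_1 < ⋯ < λ_n and orthonormal eigenbasis v_1, …, v_n satisfying ‖v_j‖_∞ ≤ M for all j, and let the initial state ψ0 be a standard basis vector. Then for every T > 0, Σ_f |P_f(T) − P_f(∞)| ≤ (4M²/T) · Σ_{r=1}^{n−1} Σ_{i=1}^{n−r} 1/(λ_{i+r} − λ_i), the outer sum over all standard basis vectors f. -/

import Mathlib

open scoped BigOperators

section Aux
attribute [local instance] Matrix.linftyOpNormedAddCommGroup Matrix.linftyOpNormedRing
  Matrix.linftyOpNormedAlgebra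

theorem exp_mulVec_eigen {n : ℕ} (A : Matrix (Fin n) (Fin n) ℂ) (w : Fin n → ℂ) (μ : ℂ)
    (h : A.mulVec w = μ • w) :
    (NormedSpace.exp A).mulVec w = NormedSpace.exp μ • w := by
  have hpow : ∀ k : ℕ, (A ^ k).mulVec w = μ ^ k • w := by
    intro k
    induction k with
    | zero => simp [Matrix.one_mulVec]
    | succ k ih =>
      rw [pow_succ, ← Matrix.mulVec_mulVec, h, Matrix.mulVec_smul, ih, smul_smul, pow_succ,
        mul_comm]
  let L : Matrix (Fin n) (Fin n) ℂ →ₗ[ℂ] (Fin n → ℂ) :=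
    { toFun := fun B => B.mulVec w
      map_add' := fun B C => Matrix.add_mulVec B C w
      map_smul' := fun c B => (Matrix.smul_mulVec c B w) }
  let Lc : Matrix (Fin n) (Fin n) ℂ →L[ℂ] (Fin n → ℂ) := L.toContinuousLinearMap
  have h1 : (NormedSpace.exp A).mulVec w = Lc (NormedSpace.exp A) := rfl
  rw [h1, NormedSpace.exp_eq_tsum (𝕂 := ℂ)]
  rw [Lc.map_tsum (NormedSpace.expSeries_summable' (𝕂 := ℂ) A)]
  have h2 : ∀ k : ℕ, Lc (((k.factorial : ℂ))⁻¹ • A ^ k) = (((k.factorial : ℂ))⁻¹ * μ ^ k) • w := by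
    intro k
    rw [map_smul]
    show ((k.factorial : ℂ))⁻¹ • (A ^ k).mulVec w = _
    rw [hpow, smul_smul]
  simp_rw [h2]
  rw [Summable.tsum_smul_const]
  · congr 1
    rw [NormedSpace.exp_eq_tsum (𝕂 := ℂ)]
    simp_rw [smul_eq_mul]
  · simpa [smul_eq_mul] using (NormedSpace.expSeries_summable' (𝕂 := ℂ) μ)

end Aux



theorem norm_integral_exp_le (d T : ℝ) (hd : d ≠ 0) :
    ‖∫ t in (0:ℝ)..T, Complex.exp ((d : ℂ) * Complex.I * t)‖ ≤ 2 / |d| := by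
  have hc : (d : ℂ) * Complex.I ≠ 0 :=
    mul_ne_zero (by exact_mod_cast hd) Complex.I_ne_zero
  rw [integral_exp_mul_complex hc, norm_div]
  have h1 : ‖(d : ℂ) * Complex.I‖ = |d| := by
    rw [norm_mul, Complex.norm_I, mul_one, Complex.norm_real, Real.norm_eq_abs]
  rw [h1]
  have h2 : ‖Complex.exp ((d:ℂ) * Complex.I * T) - Complex.exp ((d:ℂ) * Complex.I * 0)‖ ≤ 2 := by
    refine (norm_sub_le _ _).trans ?_
    have e1 : ‖Complex.exp ((d:ℂ) * Complex.I * T)‖ = 1 := by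
      rw [Complex.norm_exp]
      simp
    have e2 : ‖Complex.exp ((d:ℂ) * Complex.I * 0)‖ = 1 := by
      rw [Complex.norm_exp]
      simp
    rw [e1, e2]; norm_num
  gcongr
  simpa using h2

set_option maxHeartbeats 1000000 in
theorem time_average_bound {n : ℕ} (lam : Fin n → ℝ) (hlam : Function.Injective lam)
    (a : Fin n → ℂ) (T : ℝ) (hT : 0 < T) :
    |(1 / T) * (∫ t in (0:ℝ)..T, ‖∑ i, a i * Complex.exp (-(lam i : ℂ) * Complex.I * t)‖ ^ 2)
        - ∑ i, ‖a i‖ ^ 2|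
      ≤ ∑ i, ∑ i', if i = i' then 0
          else (1 / T) * (‖a i‖ * ‖a i'‖ * (2 / |lam i' - lam i|)) := by
  classical
  set g : Fin n → Fin n → ℝ → ℂ := fun i i' t =>
    (a i * (starRingEnd ℂ) (a i')) * Complex.exp (((lam i' - lam i : ℝ) : ℂ) * Complex.I * t)
    with hg
  have hterm : ∀ (t : ℝ) (i i' : Fin n),
      (a i * Complex.exp (-(lam i : ℂ) * Complex.I * t)) *
        (starRingEnd ℂ) (a i' * Complex.exp (-(lam i' : ℂ) * Complex.I * t)) = g i i' t := by
    intro t i i'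
    rw [hg]
    simp only [map_mul, ← Complex.exp_conj, map_neg, Complex.conj_I, Complex.conj_ofReal]
    rw [mul_mul_mul_comm, ← Complex.exp_add]
    congr 2
    push_cast
    ring
  have hsq : ∀ t : ℝ, ‖∑ i, a i * Complex.exp (-(lam i : ℂ) * Complex.I * t)‖ ^ 2
      = (∑ i, ∑ i', g i i' t).re := by
    intro t
    have h1 : (‖∑ i, a i * Complex.exp (-(lam i:ℂ) * Complex.I * t)‖:ℝ) ^ 2
        = ((∑ i, a i * Complex.exp (-(lam i:ℂ) * Complex.I * t)) *
            (starRingEnd ℂ) (∑ i', a i' * Complex.exp (-(lam i':ℂ) * Complex.I * t))).re := by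
      rw [Complex.mul_conj, Complex.ofReal_re, Complex.normSq_eq_norm_sq]
    rw [h1, map_sum, Finset.sum_mul_sum]
    congr 1
    exact Finset.sum_congr rfl fun i _ => Finset.sum_congr rfl fun i' _ => hterm t i i'
  have hgc : ∀ i i', Continuous (g i i') := by
    intro i i'
    exact continuous_const.mul
      (Complex.continuous_exp.comp (continuous_const.mul Complex.continuous_ofReal))
  have hGc : Continuous fun t => ∑ i, ∑ i', g i i' t := by
    apply continuous_finset_sum
    intro i _
    apply continuous_finset_sum
    intro i' _
    exact hgc i i'
  have hswap : (∫ t in (0:ℝ)..T, ∑ i, ∑ i', g i i' t)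
      = ∑ i, ∑ i', ∫ t in (0:ℝ)..T, g i i' t := by
    rw [intervalIntegral.integral_finset_sum (f := fun i t => ∑ i', g i i' t) (fun i _ =>
        (continuous_finset_sum Finset.univ fun i' _ => hgc i i').intervalIntegrable 0 T)]
    exact Finset.sum_congr rfl fun i _ =>
        intervalIntegral.integral_finset_sum (fun i' _ => (hgc i i').intervalIntegrable 0 T)
  set E : Fin n → Fin n → ℂ := fun i i' => (a i * (starRingEnd ℂ) (a i')) *
      ∫ t in (0:ℝ)..T, Complex.exp (((lam i' - lam i : ℝ):ℂ) * Complex.I * t) with hE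
  have hint : (∫ t in (0:ℝ)..T, ‖∑ i, a i * Complex.exp (-(lam i:ℂ) * Complex.I * t)‖ ^ 2)
      = (∑ i, ∑ i', E i i').re := by
    simp_rw [hsq]
    have h2 := Complex.reCLM.intervalIntegral_comp_comm
      (f := fun t => ∑ i, ∑ i', g i i' t) (μ := MeasureTheory.volume) (a := 0) (b := T)
      (hGc.intervalIntegrable _ _)
    have h3 : (∫ t in (0:ℝ)..T, (∑ i, ∑ i', g i i' t).re)
        = (∫ t in (0:ℝ)..T, ∑ i, ∑ i', g i i' t).re := h2
    rw [h3, hswap]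
    congr 1
    refine Finset.sum_congr rfl fun i _ => Finset.sum_congr rfl fun i' _ => ?_
    simp only [hg, hE]
    exact intervalIntegral.integral_const_mul _ _
  have hdiag : ∀ i : Fin n, E i i = ((T * ‖a i‖ ^ 2 : ℝ) : ℂ) := by
    intro i
    have h1 : ∀ t : ℝ, Complex.exp (((lam i - lam i : ℝ):ℂ) * Complex.I * t) = 1 := by
      intro t; simp
    rw [hE]
    simp only [h1]
    rw [intervalIntegral.integral_const, Complex.mul_conj]
    rw [Complex.normSq_eq_norm_sq]
    rw [sub_zero]
    rw [Complex.real_smul, mul_one]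
    push_cast
    ring
  have hsplit : (∑ i, ∑ i', E i i')
      = ((T * ∑ i, ‖a i‖ ^ 2 : ℝ) : ℂ) + ∑ i, ∑ i', (if i = i' then 0 else E i i') := by
    have h1 : ∀ i : Fin n, (∑ i', E i i')
        = ((T * ‖a i‖ ^ 2 : ℝ) : ℂ) + ∑ i', (if i = i' then 0 else E i i') := by
      intro i
      have h2 : (∑ i', E i i')
          = ∑ i', ((if i = i' then E i i' else 0) + (if i = i' then 0 else E i i')) := by
        refine Finset.sum_congr rfl fun i' _ => ?_
        by_cases h : i = i' <;> simp [h]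
      rw [h2, Finset.sum_add_distrib, Finset.sum_ite_eq, if_pos (Finset.mem_univ i), hdiag]
    rw [Finset.sum_congr rfl fun i _ => h1 i, Finset.sum_add_distrib]
    congr 1
    push_cast
    rw [Finset.mul_sum]
  rw [hint]
  have hre : (∑ i, ∑ i', E i i').re
      = T * ∑ i, ‖a i‖ ^ 2 + (∑ i, ∑ i', (if i = i' then 0 else E i i')).re := by
    rw [hsplit, Complex.add_re, Complex.ofReal_re]
  rw [hre]
  have hTne : T ≠ 0 := ne_of_gt hT
  have hred : (1 / T) * (T * ∑ i, ‖a i‖ ^ 2 + (∑ i, ∑ i', (if i = i' then 0 else E i i')).re)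
        - ∑ i, ‖a i‖ ^ 2
      = (1 / T) * (∑ i, ∑ i', (if i = i' then 0 else E i i')).re := by
    field_simp
    ring
  rw [hred]
  set S : ℂ := ∑ i, ∑ i', (if i = i' then 0 else E i i') with hS
  have habs : |(1 / T) * S.re| ≤ (1 / T) * ‖S‖ := by
    rw [abs_mul, abs_of_pos (by positivity : (0:ℝ) < 1 / T)]
    gcongr
    exact Complex.abs_re_le_norm S
  refine habs.trans ?_
  have hnorm : ‖S‖ ≤ ∑ i, ∑ i', ‖(if i = i' then (0:ℂ) else E i i')‖ := by
    rw [hS]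
    refine (norm_sum_le _ _).trans ?_
    exact Finset.sum_le_sum fun i _ => norm_sum_le _ _
  calc (1 / T) * ‖S‖ ≤ (1 / T) * ∑ i, ∑ i', ‖(if i = i' then (0:ℂ) else E i i')‖ := by
        gcongr
    _ ≤ ∑ i, ∑ i', if i = i' then 0
          else (1 / T) * (‖a i‖ * ‖a i'‖ * (2 / |lam i' - lam i|)) := by
        rw [Finset.mul_sum]
        refine Finset.sum_le_sum fun i _ => ?_
        rw [Finset.mul_sum]
        refine Finset.sum_le_sum fun i' _ => ?_
        by_cases h : i = i'
        · simp [h]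
        · rw [if_neg h, if_neg h]
          have hd : lam i' - lam i ≠ 0 := by
            refine sub_ne_zero.mpr fun hc => h ?_
            exact (hlam hc).symm
          have h1 : ‖E i i'‖ ≤ ‖a i‖ * ‖a i'‖ * (2 / |lam i' - lam i|) := by
            rw [hE]
            rw [norm_mul, norm_mul]
            have h2 : ‖(starRingEnd ℂ) (a i')‖ = ‖a i'‖ := norm_star _
            rw [h2]
            gcongr
            exact norm_integral_exp_le _ _ hd
          gcongr


theorem comb_reindex {n : ℕ} (hn : 0 < n) (lam : Fin n → ℝ) :
    (∑ r ∈ Finset.Icc 1 (n - 1), ∑ i : Fin n,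
        if h : (i : ℕ) + r < n then 1 / (lam ⟨(i : ℕ) + r, h⟩ - lam i) else 0)
      = ∑ i : Fin n, ∑ i' : Fin n, (if i < i' then 1 / (lam i' - lam i) else 0) := by
  classical
  have h1 : (∑ q ∈ (Finset.Icc 1 (n-1)) ×ˢ (Finset.univ : Finset (Fin n)),
      if h : (q.2 : ℕ) + q.1 < n then 1 / (lam ⟨(q.2 : ℕ) + q.1, h⟩ - lam q.2) else 0)
      = ∑ r ∈ Finset.Icc 1 (n - 1), ∑ i : Fin n,
        if h : (i : ℕ) + r < n then 1 / (lam ⟨(i : ℕ) + r, h⟩ - lam i) else 0 := by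
    rw [Finset.sum_product]
  have h2 : (∑ p ∈ (Finset.univ : Finset (Fin n)) ×ˢ (Finset.univ : Finset (Fin n)),
      if p.1 < p.2 then 1 / (lam p.2 - lam p.1) else 0)
      = ∑ i : Fin n, ∑ i' : Fin n, (if i < i' then 1 / (lam i' - lam i) else 0) := by
    rw [Finset.sum_product]
  rw [← h1, ← h2]
  rw [← Finset.sum_filter_of_ne (p := fun q : ℕ × Fin n => (q.2 : ℕ) + q.1 < n)
    (by intro q _ hq; by_contra hc; exact hq (dif_neg hc))]
  rw [← Finset.sum_filter_of_ne (p := fun p : Fin n × Fin n => p.1 < p.2)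
    (by intro p _ hp; by_contra hc; exact hp (if_neg hc))]
  refine Finset.sum_nbij' (fun q => (q.2, ⟨((q.2 : ℕ) + q.1) % n, Nat.mod_lt _ hn⟩))
    (fun p => ((p.2 : ℕ) - (p.1 : ℕ), p.1)) ?_ ?_ ?_ ?_ ?_
  · intro q hq
    simp only [Finset.mem_filter, Finset.mem_product, Finset.mem_Icc, Finset.mem_univ,
      true_and, and_true] at hq
    simp only [Finset.mem_filter, Finset.mem_product, Finset.mem_univ, true_and, and_true,
      Fin.lt_def]
    show (q.2 : ℕ) < ((q.2 : ℕ) + q.1) % n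
    rw [Nat.mod_eq_of_lt hq.2]
    omega
  · intro p hp
    simp only [Finset.mem_filter, Finset.mem_product, Finset.mem_univ, true_and, and_true,
      Fin.lt_def] at hp
    have h4 := p.2.isLt
    simp only [Finset.mem_filter, Finset.mem_product, Finset.mem_Icc, Finset.mem_univ,
      true_and, and_true]
    omega
  · intro q hq
    simp only [Finset.mem_filter, Finset.mem_product, Finset.mem_Icc, Finset.mem_univ,
      true_and, and_true] at hq
    have : (((q.2 : ℕ) + q.1) % n) = (q.2 : ℕ) + q.1 := Nat.mod_eq_of_lt hq.2
    refine Prod.ext ?_ rfl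
    show ((((q.2 : ℕ) + q.1) % n) - (q.2 : ℕ)) = q.1
    omega
  · intro p hp
    simp only [Finset.mem_filter, Finset.mem_product, Finset.mem_univ, true_and, and_true,
      Fin.lt_def] at hp
    have h4 := p.2.isLt
    refine Prod.ext rfl (Fin.ext ?_)
    show ((p.1 : ℕ) + ((p.2 : ℕ) - (p.1 : ℕ))) % n = (p.2 : ℕ)
    rw [Nat.mod_eq_of_lt (by omega)]
    omega
  · intro q hq
    simp only [Finset.mem_filter, Finset.mem_product, Finset.mem_Icc, Finset.mem_univ,
      true_and, and_true] at hq
    have hmod : (((q.2 : ℕ) + q.1) % n) = (q.2 : ℕ) + q.1 := Nat.mod_eq_of_lt hq.2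
    rw [dif_pos hq.2, if_pos]
    · have he : (⟨(q.2 : ℕ) + q.1, hq.2⟩ : Fin n)
          = ⟨((q.2 : ℕ) + q.1) % n, Nat.mod_lt _ hn⟩ := Fin.ext (by simp [hmod])
      simp only
      rw [← he]
    · rw [Fin.lt_def]
      show (q.2 : ℕ) < ((q.2 : ℕ) + q.1) % n
      rw [hmod]
      omega


/-- For an `n × n` Hermitian matrix `H` with simple spectrum,
strictly increasing eigenvalues `lam`, orthonormal eigenbasis `v` with all eigenvectors
delocalized (`‖v j‖_∞ ≤ M`), and initial state a standard basis vector `e j`, for every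
`T > 0` the total variation distance between the time-averaged and limiting
distributions is at most `(4M²/T) ⬝ ∑_{r=1}^{n-1} ∑_{i=1}^{n-r} 1/(lam (i+r) − lam i)`. -/
theorem quantum_walk_total_variation_bound_of_delocalized
    {n : ℕ} (hn : 2 ≤ n) (H : Matrix (Fin n) (Fin n) ℂ) (hH : H.IsHermitian)
    (lam : Fin n → ℝ) (hlam : StrictMono lam)
    (v : Fin n → (Fin n → ℂ))
    (hortho : ∀ i j, ∑ k, star (v i k) * v j k = if i = j then 1 else 0)
    (heig : ∀ i, H.mulVec (v i) = (lam i : ℂ) • v i)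
    (M : ℝ) (hdeloc : ∀ j k, ‖v j k‖ ≤ M)
    (j : Fin n) (ψ0 : Fin n → ℂ) (hψ0 : ψ0 = fun k => if k = j then 1 else 0)
    (T : ℝ) (hT : 0 < T) :
    ∑ f : Fin n,
      |((1 / T) * ∫ t in (0:ℝ)..T,
          ‖((NormedSpace.exp ((-(t : ℂ) * Complex.I) • H)).mulVec ψ0) f‖ ^ 2)
        - ∑ i, ‖v i f‖ ^ 2 * ‖∑ k, star (v i k) * ψ0 k‖ ^ 2|
      ≤ (4 * M ^ 2 / T) * ∑ r ∈ Finset.Icc 1 (n - 1), ∑ i : Fin n,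
          if h : (i : ℕ) + r < n then 1 / (lam ⟨(i : ℕ) + r, h⟩ - lam i) else 0 := by

  classical
  have hn0 : 0 < n := by omega
  have hM0 : 0 ≤ M := le_trans (norm_nonneg (v j j)) (hdeloc j j)
  have hcompl : ∀ f k : Fin n, ∑ i, v i f * star (v i k) = if f = k then 1 else 0 := by
    classical
    let U : Matrix (Fin n) (Fin n) ℂ := Matrix.of fun k i => v i k
    have hU : U.conjTranspose * U = 1 := by
      ext i i'
      simpa [U, Matrix.mul_apply, Matrix.conjTranspose_apply, Matrix.one_apply] using hortho i i'
    have hU2 : U * U.conjTranspose = 1 := mul_eq_one_comm.mp hU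
    intro f k
    have h3 : (U * U.conjTranspose) f k = (1 : Matrix (Fin n) (Fin n) ℂ) f k := by rw [hU2]
    simpa [U, Matrix.mul_apply, Matrix.conjTranspose_apply, Matrix.one_apply] using h3
  have hψsum : ψ0 = ∑ i, (star (v i j)) • v i := by
    funext k
    rw [hψ0]
    simp only [Finset.sum_apply, Pi.smul_apply, smul_eq_mul]
    rw [show (if k = j then (1:ℂ) else 0) = ∑ i, v i k * star (v i j) from (hcompl k j).symm]
    exact Finset.sum_congr rfl fun i _ => mul_comm _ _
  have hamp : ∀ (t : ℝ) (f : Fin n),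
      ((NormedSpace.exp ((-(t:ℂ) * Complex.I) • H)).mulVec ψ0) f
        = ∑ i, (star (v i j) * v i f) * Complex.exp (-(lam i : ℂ) * Complex.I * t) := by
    intro t f
    have hexpv : ∀ i, (NormedSpace.exp ((-(t:ℂ) * Complex.I) • H)).mulVec (v i)
        = Complex.exp (-(lam i:ℂ) * Complex.I * t) • v i := by
      intro i
      have hAv : ((-(t:ℂ) * Complex.I) • H).mulVec (v i)
          = ((-(t:ℂ) * Complex.I * (lam i))) • v i := by
        rw [Matrix.smul_mulVec, heig, smul_smul]
      rw [exp_mulVec_eigen _ _ _ hAv]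
      congr 1
      rw [← Complex.exp_eq_exp_ℂ]
      congr 1
      ring
    have hlin : (NormedSpace.exp ((-(t:ℂ) * Complex.I) • H)).mulVec (∑ i, (star (v i j)) • v i)
        = ∑ i, (star (v i j)) • ((NormedSpace.exp ((-(t:ℂ) * Complex.I) • H)).mulVec (v i)) := by
      rw [← Matrix.mulVecLin_apply, map_sum]
      simp only [map_smul, Matrix.mulVecLin_apply]
    rw [hψsum, hlin]
    simp only [hexpv, Finset.sum_apply, Pi.smul_apply, smul_eq_mul]
    exact Finset.sum_congr rfl fun i _ => by ring
  have hinner : ∀ i, (∑ k, star (v i k) * ψ0 k) = star (v i j) := by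
    intro i
    rw [hψ0]
    simp [mul_ite]
  have hper : ∀ f : Fin n,
      |((1 / T) * ∫ t in (0:ℝ)..T,
          ‖((NormedSpace.exp ((-(t : ℂ) * Complex.I) • H)).mulVec ψ0) f‖ ^ 2)
        - ∑ i, ‖v i f‖ ^ 2 * ‖∑ k, star (v i k) * ψ0 k‖ ^ 2|
      ≤ ∑ i, ∑ i', if i = i' then 0
          else (1 / T) * (‖star (v i j) * v i f‖ * ‖star (v i' j) * v i' f‖
            * (2 / |lam i' - lam i|)) := by
    intro f
    have hb := time_average_bound lam hlam.injective (fun i => star (v i j) * v i f) T hT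
    have he1 : ∀ t : ℝ, ((NormedSpace.exp ((-(t : ℂ) * Complex.I) • H)).mulVec ψ0) f
        = ∑ i, (star (v i j) * v i f) * Complex.exp (-(lam i : ℂ) * Complex.I * t) :=
      fun t => hamp t f
    simp only [he1]
    have he2 : ∀ i, ‖v i f‖ ^ 2 * ‖∑ k, star (v i k) * ψ0 k‖ ^ 2
        = ‖star (v i j) * v i f‖ ^ 2 := by
      intro i
      rw [hinner i, norm_mul, norm_star]
      ring
    simp only [he2]
    exact hb
  have hnorm1 : ∀ i, ∑ f, ‖v i f‖ ^ 2 = 1 := by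
    intro i
    have h := hortho i i
    rw [if_pos rfl] at h
    have h2 : ∀ k : Fin n, star (v i k) * v i k = ((‖v i k‖ ^ 2 : ℝ) : ℂ) := by
      intro k
      rw [mul_comm, Complex.star_def, Complex.mul_conj, Complex.normSq_eq_norm_sq]
    rw [Finset.sum_congr rfl fun k _ => h2 k, ← Complex.ofReal_sum] at h
    exact_mod_cast h
  have hCS : ∀ i i' : Fin n, ∑ f, ‖v i f‖ * ‖v i' f‖ ≤ 1 := by
    intro i i'
    have h1 := Finset.sum_mul_sq_le_sq_mul_sq Finset.univ (fun f => ‖v i f‖) (fun f => ‖v i' f‖)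
    rw [hnorm1 i, hnorm1 i'] at h1
    have h0 : (0:ℝ) ≤ ∑ f, ‖v i f‖ * ‖v i' f‖ :=
      Finset.sum_nonneg fun f _ => mul_nonneg (norm_nonneg _) (norm_nonneg _)
    nlinarith
  calc ∑ f : Fin n,
      |((1 / T) * ∫ t in (0:ℝ)..T,
          ‖((NormedSpace.exp ((-(t : ℂ) * Complex.I) • H)).mulVec ψ0) f‖ ^ 2)
        - ∑ i, ‖v i f‖ ^ 2 * ‖∑ k, star (v i k) * ψ0 k‖ ^ 2|
      ≤ ∑ f : Fin n, ∑ i, ∑ i', if i = i' then 0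
          else (1 / T) * (‖star (v i j) * v i f‖ * ‖star (v i' j) * v i' f‖
            * (2 / |lam i' - lam i|)) := Finset.sum_le_sum fun f _ => hper f
    _ = ∑ i, ∑ i', ∑ f : Fin n, if i = i' then 0
          else (1 / T) * (‖star (v i j) * v i f‖ * ‖star (v i' j) * v i' f‖
            * (2 / |lam i' - lam i|)) := by
        rw [Finset.sum_comm]
        exact Finset.sum_congr rfl fun i _ => Finset.sum_comm
    _ ≤ ∑ i, ∑ i', if i = i' then 0 else 2 * M ^ 2 / (T * |lam i' - lam i|) := by
        refine Finset.sum_le_sum fun i _ => Finset.sum_le_sum fun i' _ => ?_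
        by_cases h : i = i'
        · simp [h]
        · simp only [if_neg h]
          have hre : ∀ f : Fin n, (1 / T) * (‖star (v i j) * v i f‖ * ‖star (v i' j) * v i' f‖
              * (2 / |lam i' - lam i|))
              = ((1 / T) * (‖v i j‖ * ‖v i' j‖) * (2 / |lam i' - lam i|))
                  * (‖v i f‖ * ‖v i' f‖) := by
            intro f
            rw [norm_mul, norm_star, norm_mul, norm_star]
            ring
          rw [Finset.sum_congr rfl fun f _ => hre f, ← Finset.mul_sum]
          calc ((1 / T) * (‖v i j‖ * ‖v i' j‖) * (2 / |lam i' - lam i|))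
                  * (∑ f, ‖v i f‖ * ‖v i' f‖)
              ≤ ((1 / T) * (M * M) * (2 / |lam i' - lam i|)) * 1 := by
                have g1 : ‖v i j‖ ≤ M := hdeloc i j
                have g2 : ‖v i' j‖ ≤ M := hdeloc i' j
                have g3 := hCS i i'
                have g0 : (0:ℝ) ≤ ∑ f, ‖v i f‖ * ‖v i' f‖ :=
                  Finset.sum_nonneg fun f _ => mul_nonneg (norm_nonneg _) (norm_nonneg _)
                gcongr
            _ = 2 * M ^ 2 / (T * |lam i' - lam i|) := by ring
    _ = (4 * M ^ 2 / T) * ∑ i : Fin n, ∑ i' : Fin n,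
          (if i < i' then 1 / (lam i' - lam i) else 0) := by
        have hpt : ∀ i i' : Fin n, (if i = i' then (0:ℝ)
              else 2 * M ^ 2 / (T * |lam i' - lam i|))
            = (2 * M ^ 2 / T) * ((if i < i' then 1 / (lam i' - lam i) else 0)
              + (if i' < i then 1 / (lam i - lam i') else 0)) := by
          intro i i'
          rcases lt_trichotomy i i' with h | h | h
          · rw [if_neg (ne_of_lt h), if_pos h, if_neg (asymm h),
              abs_of_pos (sub_pos.mpr (hlam h))]
            rw [div_mul_eq_div_div]
            ring
          · subst h
            simp
          · rw [if_neg (ne_of_gt h), if_neg (asymm h), if_pos h,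
              abs_of_neg (sub_neg.mpr (hlam h))]
            rw [div_mul_eq_div_div]
            ring
        simp_rw [hpt]
        simp_rw [← Finset.mul_sum]
        have hsplit2 : (∑ i : Fin n, ∑ i' : Fin n,
              ((if i < i' then 1 / (lam i' - lam i) else 0)
                + (if i' < i then 1 / (lam i - lam i') else 0)))
            = (∑ i : Fin n, ∑ i' : Fin n, (if i < i' then 1 / (lam i' - lam i) else 0))
              + ∑ i : Fin n, ∑ i' : Fin n, (if i' < i then 1 / (lam i - lam i') else 0) := by
          rw [← Finset.sum_add_distrib]
          exact Finset.sum_congr rfl fun i _ => Finset.sum_add_distrib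
        have hflip : (∑ i : Fin n, ∑ i' : Fin n, (if i' < i then 1 / (lam i - lam i') else 0))
            = ∑ i : Fin n, ∑ i' : Fin n, (if i < i' then 1 / (lam i' - lam i) else 0) :=
          Finset.sum_comm
        rw [hsplit2, hflip]
        ring
    _ = (4 * M ^ 2 / T) * ∑ r ∈ Finset.Icc 1 (n - 1), ∑ i : Fin n,
          if h : (i : ℕ) + r < n then 1 / (lam ⟨(i : ℕ) + r, h⟩ - lam i) else 0 := by
        rw [comb_reindex hn0 lam]
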